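/- arXiv:0705.3919 — 3 statements merged into one kernel-verified Lean document; each statement's English description precedes it below -/
import Mathlib

section
/- Let $H_1, H_2$ be right Hilbert $B$-modules and let $u_1, \dots, u_n \in \mathcal{L}(H_1 \oplus H_2)$ be unitaries with $u_i^* u_j(H_2) \perp H_2$ for $i \neq j$. If $b \in \mathcal{L}(H_1 \oplus H_2)$ satisfies $b(H_1 \oplus H_2) \subseteq H_2$, then $\left\| \sum_{i=1}^{n} u_i b u_i^* \right\|^2 \leq n \|b\|^2$. -/
section Aux

variable {L : Type*} [NormedRing L] [StarRing L] [CStarRing L]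

/-- Orthogonal ranges inequality: if `P₁ c = c`, `P₂ d = d` with complementary
projections, then `‖c + d‖² ≤ ‖c‖² + ‖d‖²`. -/
lemma orth_norm_sq_add (P₁ P₂ : L) (h₁ : IsSelfAdjoint P₁)
    (hi₂ : P₂ * P₂ = P₂) (hsum : P₁ + P₂ = 1)
    (c d : L) (hc : P₁ * c = c) (hd : P₂ * d = d) :
    ‖c + d‖ ^ 2 ≤ ‖c‖ ^ 2 + ‖d‖ ^ 2 := by
  have hP12 : P₁ * P₂ = 0 := by
    have h : P₁ = 1 - P₂ := eq_sub_of_add_eq hsum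
    rw [h, sub_mul, one_mul, hi₂, sub_self]
  have hcd : star c * d = 0 := by
    rw [← hc, ← hd, star_mul, h₁.star_eq, mul_assoc, ← mul_assoc P₁, hP12,
      zero_mul, mul_zero]
  have hdc : star d * c = 0 := by
    have := congrArg star hcd
    rwa [star_mul, star_star, star_zero] at this
  have key : star (c + d) * (c + d) = star c * c + star d * d := by
    rw [star_add, add_mul, mul_add, mul_add, hcd, hdc, add_zero, zero_add]
  calc ‖c + d‖ ^ 2 = ‖star (c + d) * (c + d)‖ := by
        rw [CStarRing.norm_star_mul_self, sq]
    _ = ‖star c * c + star d * d‖ := by rw [key]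
    _ ≤ ‖star c * c‖ + ‖star d * d‖ := norm_add_le _ _
    _ = ‖c‖ ^ 2 + ‖d‖ ^ 2 := by
        rw [CStarRing.norm_star_mul_self, CStarRing.norm_star_mul_self, sq, sq]

end Aux

/-- In `ℒ(H₁ ⊕ H₂)` (the C*-algebra `L` of adjointable operators on the
orthogonal direct sum of two Hilbert `B`-modules, with `P₁, P₂` the complementary
orthogonal projections onto `H₁`, `H₂`), if `u₁, …, uₙ` are unitaries with
`uᵢ* uⱼ (H₂) ⟂ H₂` for `i ≠ j` (i.e. `P₂ (uᵢ* uⱼ) P₂ = 0`) and `b` has range in `H₂`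
(i.e. `P₂ b = b`), then `‖∑ uᵢ b uᵢ*‖² ≤ n ‖b‖²`. -/
theorem sum_conjugates_norm_sq_le {L : Type*} [NormedRing L] [StarRing L]
    [CStarRing L] [CompleteSpace L] [NormedAlgebra ℂ L] [StarModule ℂ L]
    (P₁ P₂ : L) (h₁ : IsSelfAdjoint P₁) (h₂ : IsSelfAdjoint P₂)
    (hi₁ : P₁ * P₁ = P₁) (hi₂ : P₂ * P₂ = P₂) (hsum : P₁ + P₂ = 1)
    (n : ℕ) (u : Fin n → L) (hu : ∀ i, u i ∈ unitary L)
    (horth : ∀ i j, i ≠ j → P₂ * (star (u i) * u j) * P₂ = 0)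
    (b : L) (hb : P₂ * b = b) :
    ‖∑ i, u i * b * star (u i)‖ ^ 2 ≤ (n : ℝ) * ‖b‖ ^ 2 := by
  induction n with
  | zero => simp
  | succ n ih =>
    set S' : L := ∑ i : Fin n, u i.castSucc * b * star (u i.castSucc) with hS'
    have ih' : ‖S'‖ ^ 2 ≤ (n : ℝ) * ‖b‖ ^ 2 :=
      ih (fun i => u i.castSucc) (fun i => hu _)
        (fun i j hij => horth _ _ (fun h => hij (Fin.castSucc_injective n h)))
    set w : L := u (Fin.last n) with hw
    have hwu : w ∈ unitary L := hu _
    set c : L := ∑ i : Fin n, star w * u i.castSucc * b * star (u i.castSucc) with hc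
    set d : L := b * star w with hd
    have hsplit : star w * (∑ i, u i * b * star (u i)) = c + d := by
      rw [Fin.sum_univ_castSucc, mul_add, Finset.mul_sum]
      congr 1
      · exact Finset.sum_congr rfl fun i _ => by simp only [mul_assoc]
      · rw [hd, ← hw]
        calc star w * (w * b * star w) = (star w * w) * (b * star w) := by
              simp only [mul_assoc]
          _ = b * star w := by rw [(Unitary.mem_iff.mp hwu).1, one_mul]
    have hnorm : ‖∑ i, u i * b * star (u i)‖ = ‖c + d‖ := by
      rw [← hsplit, CStarRing.norm_mem_unitary_mul _ (Unitary.star_mem hwu)]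
    have hP1c : P₁ * c = c := by
      have hP2c : P₂ * c = 0 := by
        rw [hc, Finset.mul_sum]
        refine Finset.sum_eq_zero fun i _ => ?_
        have h0 : P₂ * (star w * u i.castSucc) * P₂ = 0 :=
          horth (Fin.last n) i.castSucc (fun h => (Fin.castSucc_lt_last i).ne' h)
        have step : P₂ * (star w * u i.castSucc * b * star (u i.castSucc))
            = (P₂ * (star w * u i.castSucc) * P₂) * (b * star (u i.castSucc)) := by
          conv_lhs => rw [← hb]
          simp only [mul_assoc]
        rw [step, h0, zero_mul]
      have h : P₁ = 1 - P₂ := eq_sub_of_add_eq hsum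
      rw [h, sub_mul, one_mul, hP2c, sub_zero]
    have hP2d : P₂ * d = d := by rw [hd, ← mul_assoc, hb]
    have hcle : ‖c‖ ≤ ‖S'‖ := by
      have h : c = star w * S' := by
        rw [hc, hS', Finset.mul_sum]
        exact Finset.sum_congr rfl fun i _ => by simp only [mul_assoc]
      rw [h, CStarRing.norm_mem_unitary_mul _ (Unitary.star_mem hwu)]
    have hdle : ‖d‖ = ‖b‖ := by
      rw [hd, CStarRing.norm_mul_mem_unitary _ (Unitary.star_mem hwu)]
    have hc2 : ‖c‖ ^ 2 ≤ (n : ℝ) * ‖b‖ ^ 2 :=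
      le_trans (pow_le_pow_left₀ (norm_nonneg _) hcle 2) ih'
    calc ‖∑ i, u i * b * star (u i)‖ ^ 2 = ‖c + d‖ ^ 2 := by rw [hnorm]
      _ ≤ ‖c‖ ^ 2 + ‖d‖ ^ 2 := orth_norm_sq_add P₁ P₂ h₁ hi₂ hsum c d hP1c hP2d
      _ ≤ (n : ℝ) * ‖b‖ ^ 2 + ‖b‖ ^ 2 := by rw [hdle]; exact add_le_add hc2 le_rfl
      _ = ((n + 1 : ℕ) : ℝ) * ‖b‖ ^ 2 := by push_cast; ring
end

section
/- The kernel of the homomorphism $h : BS(1,n) \to \mathbb{Z}$ (with $h(a)=0$, $h(b)=1$, $|n|>1$) is isomorphic to the additive group $\mathbb{Z}[1/n]$. -/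
/-- The defining relation of the Baumslag–Solitar group `BS(m,n) = ⟨a,b ∣ b⁻¹aᵐb = aⁿ⟩`,
with `a` the generator `true` and `b` the generator `false`. -/
def BSrel (m n : ℤ) : Set (FreeGroup Bool) :=
  {(FreeGroup.of false)⁻¹ * (FreeGroup.of true) ^ m * FreeGroup.of false *
    (FreeGroup.of true) ^ (-n)}

/-- The Baumslag–Solitar group `BS(m,n)` as a presented group. -/
def BS (m n : ℤ) : Type := PresentedGroup (BSrel m n)

instance (m n : ℤ) : Group (BS m n) := by unfold BS; infer_instance

/-- The generator `a` of `BS(m,n)`. -/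
def BSa (m n : ℤ) : BS m n := PresentedGroup.of true

/-- The generator `b` of `BS(m,n)`. -/
def BSb (m n : ℤ) : BS m n := PresentedGroup.of false


lemma BS_rel (n : ℤ) : (BSb 1 n)⁻¹ * BSa 1 n * BSb 1 n = (BSa 1 n) ^ n := by
  have h1 : PresentedGroup.mk (BSrel 1 n)
      ((FreeGroup.of false)⁻¹ * (FreeGroup.of true) ^ (1:ℤ) * FreeGroup.of false *
        (FreeGroup.of true) ^ (-n)) = 1 := by
    apply (QuotientGroup.eq_one_iff _).mpr
    exact Subgroup.subset_normalClosure rfl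
  simp only [map_mul, map_inv, map_zpow, zpow_one] at h1
  have h2 : (BSb 1 n)⁻¹ * BSa 1 n * BSb 1 n * (BSa 1 n) ^ (-n) = 1 := h1
  rw [zpow_neg, mul_inv_eq_one] at h2
  exact h2

lemma BS_conj (n : ℤ) (k : ℤ) :
    (BSa 1 n) ^ k = BSb 1 n * (BSa 1 n) ^ (n * k) * (BSb 1 n)⁻¹ := by
  have h := BS_rel n
  have : BSa 1 n = BSb 1 n * (BSa 1 n) ^ n * (BSb 1 n)⁻¹ := by
    rw [← h]; group
  calc (BSa 1 n) ^ k = (BSb 1 n * (BSa 1 n) ^ n * (BSb 1 n)⁻¹) ^ k := by rw [← this]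
    _ = BSb 1 n * ((BSa 1 n) ^ n) ^ k * (BSb 1 n)⁻¹ := by rw [conj_zpow]
    _ = BSb 1 n * (BSa 1 n) ^ (n * k) * (BSb 1 n)⁻¹ := by rw [← zpow_mul]

/-- `t i k = bⁱ aᵏ b⁻ⁱ`. -/
def BSt (n : ℤ) (i : ℕ) (k : ℤ) : BS 1 n :=
  (BSb 1 n) ^ i * (BSa 1 n) ^ k * ((BSb 1 n) ^ i)⁻¹

lemma BSt_step (n : ℤ) (i : ℕ) (k : ℤ) : BSt n i k = BSt n (i + 1) (n * k) := by
  unfold BSt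
  rw [BS_conj n k, pow_succ]
  group

lemma BSt_lift (n : ℤ) (i j : ℕ) (k : ℤ) : BSt n i k = BSt n (i + j) (n ^ j * k) := by
  induction j generalizing k with
  | zero => simp
  | succ j ih =>
    rw [ih k, BSt_step]
    congr 1
    ring

lemma BSt_mul (n : ℤ) (i : ℕ) (k l : ℤ) : BSt n i k * BSt n i l = BSt n i (k + l) := by
  unfold BSt; group

lemma BSt_inv (n : ℤ) (i : ℕ) (k : ℤ) : (BSt n i k)⁻¹ = BSt n i (-k) := by
  unfold BSt; group

/-- The subgroup of elements of the form `bⁱ aᵏ b⁻ⁱ`. -/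
def TT (n : ℤ) : Subgroup (BS 1 n) where
  carrier := {x | ∃ (i : ℕ) (k : ℤ), x = BSt n i k}
  one_mem' := ⟨0, 0, by simp [BSt]⟩
  mul_mem' := by
    rintro x y ⟨i, k, rfl⟩ ⟨j, l, rfl⟩
    refine ⟨i + j, n ^ j * k + n ^ i * l, ?_⟩
    rw [BSt_lift n i j k, BSt_lift n j i l, add_comm j i, BSt_mul]
  inv_mem' := by
    rintro x ⟨i, k, rfl⟩
    exact ⟨i, -k, BSt_inv n i k⟩

lemma conj_b_mem (n : ℤ) {x : BS 1 n} (hx : x ∈ TT n) :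
    BSb 1 n * x * (BSb 1 n)⁻¹ ∈ TT n := by
  obtain ⟨i, k, rfl⟩ := hx
  refine ⟨i + 1, k, ?_⟩
  unfold BSt
  rw [pow_succ']
  group

lemma conj_binv_mem (n : ℤ) {x : BS 1 n} (hx : x ∈ TT n) :
    (BSb 1 n)⁻¹ * x * BSb 1 n ∈ TT n := by
  obtain ⟨i, k, rfl⟩ := hx
  refine ⟨i, n * k, ?_⟩
  rw [BSt_step]
  unfold BSt
  rw [pow_succ']
  group

lemma conj_bzpow_mem (n : ℤ) (m : ℤ) {x : BS 1 n} (hx : x ∈ TT n) :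
    (BSb 1 n) ^ m * x * ((BSb 1 n) ^ m)⁻¹ ∈ TT n := by
  induction m using Int.induction_on with
  | zero => simpa using hx
  | succ m ih =>
    have := conj_b_mem n ih
    have he : BSb 1 n * ((BSb 1 n) ^ (m:ℤ) * x * ((BSb 1 n) ^ (m:ℤ))⁻¹) * (BSb 1 n)⁻¹
        = (BSb 1 n) ^ ((m:ℤ)+1) * x * ((BSb 1 n) ^ ((m:ℤ)+1))⁻¹ := by group
    rwa [he] at this
  | pred m ih =>
    have := conj_binv_mem n ih
    have he : (BSb 1 n)⁻¹ * ((BSb 1 n) ^ (-(m:ℤ)) * x * ((BSb 1 n) ^ (-(m:ℤ)))⁻¹) * BSb 1 n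
        = (BSb 1 n) ^ (-(m:ℤ)-1) * x * ((BSb 1 n) ^ (-(m:ℤ)-1))⁻¹ := by group
    rwa [he] at this

/-- The subgroup `TT ⬝ ⟨b⟩`, which is everything. -/
def KK (n : ℤ) : Subgroup (BS 1 n) where
  carrier := {x | ∃ t ∈ TT n, ∃ m : ℤ, x = t * (BSb 1 n) ^ m}
  one_mem' := ⟨1, one_mem _, 0, by simp⟩
  mul_mem' := by
    rintro x y ⟨t, ht, m, rfl⟩ ⟨t', ht', m', rfl⟩
    refine ⟨t * ((BSb 1 n) ^ m * t' * ((BSb 1 n) ^ m)⁻¹),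
      mul_mem ht (conj_bzpow_mem n m ht'), m + m', by group⟩
  inv_mem' := by
    rintro x ⟨t, ht, m, rfl⟩
    refine ⟨(BSb 1 n) ^ (-m) * t⁻¹ * ((BSb 1 n) ^ (-m))⁻¹,
      conj_bzpow_mem n (-m) (inv_mem ht), -m, by group⟩

lemma KK_eq_top (n : ℤ) (x : BS 1 n) : x ∈ KK n := by
  refine PresentedGroup.generated_by _ (KK n) ?_ x
  intro j
  cases j
  · exact ⟨1, one_mem _, 1, by simp [BSb]; exact (zpow_one _).symm⟩
  · exact ⟨BSa 1 n, ⟨0, 1, by simp [BSt]⟩, 0, by simp [BSa]; exact (mul_one _).symm⟩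

theorem Equiv.zpow_addRight {α : Type*} [AddCommGroup α] (a : α) (n : ℤ) :
    Equiv.addRight a ^ n = Equiv.addRight (n • a) := by
  induction n with
  | zero => ext x; simp
  | succ i ih =>
    rw [zpow_add_one, ih]; ext x
    simp only [Equiv.Perm.mul_apply, Equiv.coe_addRight, add_zsmul, one_zsmul]; abel
  | pred i ih =>
    rw [zpow_sub_one, ih]; ext x
    simp [sub_zsmul]; abel

theorem Equiv.Perm.apply_inv_self {α : Type*} (f : Equiv.Perm α) (x : α) : f (f⁻¹ x) = x :=
  f.apply_symm_apply x

/-- The image of the generators under the affine representation: `a ↦ (· + 1)`,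
`b ↦ (· * n⁻¹)`. -/
noncomputable def BSgen (n : ℤ) (hn : (n : ℚ) ≠ 0) : Bool → Equiv.Perm ℚ :=
  fun x => cond x (Equiv.addRight (1 : ℚ)) (Equiv.mulRight₀ (n : ℚ)⁻¹ (inv_ne_zero hn))

lemma BSgen_rel (n : ℤ) (hn : (n : ℚ) ≠ 0) :
    ∀ r ∈ BSrel 1 n, FreeGroup.lift (BSgen n hn) r = 1 := by
  intro r hr
  have hr' : r = (FreeGroup.of false)⁻¹ * (FreeGroup.of true) ^ (1:ℤ) * FreeGroup.of false *
      (FreeGroup.of true) ^ (-n) := hr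
  subst hr'
  simp only [map_mul, map_inv, map_zpow, FreeGroup.lift_apply_of, zpow_one]
  have key : BSgen n hn true * BSgen n hn false * (BSgen n hn true) ^ (-n)
      = BSgen n hn false := by
    ext q
    simp only [BSgen, cond, Equiv.zpow_addRight, smul_eq_mul, zsmul_eq_mul, Int.cast_neg, mul_one,
      Equiv.Perm.mul_apply, Equiv.coe_addRight, Equiv.mulRight₀_apply]
    field_simp
    ring
  calc (BSgen n hn false)⁻¹ * BSgen n hn true * BSgen n hn false * (BSgen n hn true) ^ (-n)
      = (BSgen n hn false)⁻¹ * (BSgen n hn true * BSgen n hn false *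
        (BSgen n hn true) ^ (-n)) := by group
    _ = 1 := by rw [key]; group

/-- The affine representation `BS(1,n) → Perm ℚ`. -/
noncomputable def fBS (n : ℤ) (hn : (n : ℚ) ≠ 0) : BS 1 n →* Equiv.Perm ℚ :=
  PresentedGroup.toGroup (BSgen_rel n hn)

lemma fBS_a (n : ℤ) (hn : (n : ℚ) ≠ 0) : fBS n hn (BSa 1 n) = Equiv.addRight (1 : ℚ) :=
  PresentedGroup.toGroup.of _

lemma fBS_b (n : ℤ) (hn : (n : ℚ) ≠ 0) :
    fBS n hn (BSb 1 n) = Equiv.mulRight₀ (n : ℚ)⁻¹ (inv_ne_zero hn) :=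
  PresentedGroup.toGroup.of _

lemma fBS_bpow (n : ℤ) (hn : (n : ℚ) ≠ 0) (i : ℕ) (q : ℚ) :
    (fBS n hn ((BSb 1 n) ^ i)) q = q * ((n : ℚ)⁻¹) ^ i := by
  induction i generalizing q with
  | zero => simp
  | succ i ih =>
    rw [pow_succ, map_mul, Equiv.Perm.mul_apply, fBS_b]
    simp only [Equiv.mulRight₀_apply] at *
    rw [ih]
    ring

lemma fBS_bpow_inv (n : ℤ) (hn : (n : ℚ) ≠ 0) (i : ℕ) (q : ℚ) :
    (fBS n hn ((BSb 1 n) ^ i))⁻¹ q = q * (n : ℚ) ^ i := by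
  apply (fBS n hn ((BSb 1 n) ^ i)).injective
  rw [Equiv.Perm.apply_inv_self, fBS_bpow]
  rw [mul_assoc, ← mul_pow, mul_inv_cancel₀ hn]
  simp

lemma fBS_apow (n : ℤ) (hn : (n : ℚ) ≠ 0) (k : ℤ) (q : ℚ) :
    (fBS n hn ((BSa 1 n) ^ k)) q = q + k := by
  rw [map_zpow, fBS_a, Equiv.zpow_addRight]
  simp

lemma fBS_t (n : ℤ) (hn : (n : ℚ) ≠ 0) (i : ℕ) (k : ℤ) (q : ℚ) :
    (fBS n hn (BSt n i k)) q = q + k / (n : ℚ) ^ i := by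
  unfold BSt
  rw [map_mul, map_mul, map_inv, Equiv.Perm.mul_apply, Equiv.Perm.mul_apply,
    fBS_bpow_inv, fBS_apow, fBS_bpow]
  field_simp
  rw [one_div, inv_pow]
  field_simp

lemma h_t (n : ℤ) (h : BS 1 n →* Multiplicative ℤ)
    (ha : h (BSa 1 n) = Multiplicative.ofAdd 0) (i : ℕ) (k : ℤ) :
    h (BSt n i k) = 1 := by
  unfold BSt
  rw [map_mul, map_mul, map_inv, map_zpow, ha]
  simp

lemma ker_char (n : ℤ) (h : BS 1 n →* Multiplicative ℤ)
    (ha : h (BSa 1 n) = Multiplicative.ofAdd 0)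
    (hb : h (BSb 1 n) = Multiplicative.ofAdd 1)
    {x : BS 1 n} (hx : x ∈ h.ker) : ∃ (i : ℕ) (k : ℤ), x = BSt n i k := by
  obtain ⟨t, ht, m, rfl⟩ := KK_eq_top n x
  obtain ⟨i, k, rfl⟩ := ht
  have hm : h (BSt n i k * (BSb 1 n) ^ m) = Multiplicative.ofAdd m := by
    rw [map_mul, h_t n h ha, map_zpow, hb, one_mul, ← ofAdd_zsmul]
    simp
  rw [MonoidHom.mem_ker, hm] at hx
  have : m = 0 := by simpa using hx
  subst this
  exact ⟨i, k, by simp⟩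

/-- For `|n| > 1`, the kernel of the homomorphism `h : BS(1,n) → ℤ`
(`h(a) = 0`, `h(b) = 1`) is isomorphic to the additive group `ℤ[1/n]` of rationals whose
denominator is a power of `n` (the additive subgroup of `ℚ` generated by the `n⁻ⁱ`,
via `bⁱ aᵏ b⁻ⁱ ↦ k/nⁱ`). -/
theorem bs_one_n_kernel_iso_z_one_over_n (n : ℤ) (hn : 1 < |n|)
    (h : BS 1 n →* Multiplicative ℤ)
    (ha : h (BSa 1 n) = Multiplicative.ofAdd 0)
    (hb : h (BSb 1 n) = Multiplicative.ofAdd 1) :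
    Nonempty (h.ker ≃*
      Multiplicative (AddSubgroup.closure (Set.range fun i : ℕ => ((n : ℚ) ^ i)⁻¹))) := by
  have hnz : n ≠ 0 := fun hc => by simp [hc] at hn
  have hn0 : (n : ℚ) ≠ 0 := Int.cast_ne_zero.mpr hnz
  set S := AddSubgroup.closure (Set.range fun i : ℕ => ((n : ℚ) ^ i)⁻¹) with hS
  have hmemS : ∀ (i : ℕ) (k : ℤ), (k : ℚ) / (n : ℚ) ^ i ∈ S := by
    intro i k
    have h1 : ((n : ℚ) ^ i)⁻¹ ∈ S := AddSubgroup.subset_closure ⟨i, rfl⟩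
    have h2 := AddSubgroup.zsmul_mem S h1 k
    rwa [zsmul_eq_mul, ← div_eq_mul_inv] at h2
  have hSform : ∀ q ∈ S, ∃ (i : ℕ) (k : ℤ), q = (k : ℚ) / (n : ℚ) ^ i := by
    intro q hq
    induction hq using AddSubgroup.closure_induction with
    | mem x hx => obtain ⟨i, rfl⟩ := hx; exact ⟨i, 1, by simp⟩
    | zero => exact ⟨0, 0, by simp⟩
    | add x y _ _ hx hy =>
      obtain ⟨i, k, rfl⟩ := hx
      obtain ⟨j, l, rfl⟩ := hy
      refine ⟨i + j, k * n ^ j + l * n ^ i, ?_⟩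
      push_cast
      field_simp
      ring
    | neg x _ hx =>
      obtain ⟨i, k, rfl⟩ := hx
      exact ⟨i, -k, by push_cast; ring⟩
  set f := fBS n hn0 with hf
  -- membership of values
  have hval : ∀ x : h.ker, f (x : BS 1 n) 0 ∈ S := by
    rintro ⟨x, hx⟩
    obtain ⟨i, k, rfl⟩ := ker_char n h ha hb hx
    rw [fBS_t]
    simpa using hmemS i k
  have htrans : ∀ x : h.ker, ∀ q : ℚ, f (x : BS 1 n) q = q + f (x : BS 1 n) 0 := by
    rintro ⟨x, hx⟩ q
    obtain ⟨i, k, rfl⟩ := ker_char n h ha hb hx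
    rw [fBS_t, fBS_t]
    ring
  let Ψ : h.ker →* Multiplicative S :=
    MonoidHom.mk' (fun x => Multiplicative.ofAdd (⟨f (x : BS 1 n) 0, hval x⟩ : S))
      (by
        intro x y
        apply Multiplicative.toAdd.injective
        apply Subtype.ext
        show f ((x : BS 1 n) * (y : BS 1 n)) 0 = f (x : BS 1 n) 0 + f (y : BS 1 n) 0
        rw [map_mul, Equiv.Perm.mul_apply, htrans x (f (y : BS 1 n) 0)]
        ring)
  have hinj : Function.Injective Ψ := by
    rw [injective_iff_map_eq_one]
    rintro ⟨x, hx⟩ hx1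
    have h0 : f x 0 = 0 := congrArg (Subtype.val ∘ Multiplicative.toAdd) hx1
    obtain ⟨i, k, rfl⟩ := ker_char n h ha hb hx
    rw [fBS_t, zero_add, div_eq_zero_iff] at h0
    have hk : (k : ℚ) = 0 := h0.resolve_right (pow_ne_zero i hn0)
    have hk' : k = 0 := by exact_mod_cast hk
    subst hk'
    apply Subtype.ext
    show BSt n i 0 = 1
    simp [BSt]
  have hsurj : Function.Surjective Ψ := by
    intro s
    obtain ⟨i, k, hik⟩ := hSform (s.toAdd : ℚ) (s.toAdd).2
    refine ⟨⟨BSt n i k, ?_⟩, ?_⟩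
    · exact MonoidHom.mem_ker.mpr (h_t n h ha i k)
    · apply Multiplicative.toAdd.injective
      apply Subtype.ext
      show f (BSt n i k) 0 = (s.toAdd : ℚ)
      rw [fBS_t, hik]
      ring
  exact ⟨MulEquiv.ofBijective Ψ ⟨hinj, hsurj⟩⟩
end

section
/- In the group $BS(-n,n) = \langle a, b \mid b^{-1} a^n b = a^{-n} \rangle$ with $n \geq 2$, the element $\lambda(a^n) + \lambda(a^{-n})$ is a nontrivial central element of the reduced group $C^*$-algebra $C^*_r(BS(-n,n))$. -/
/- ### Auxiliary lemmas -/

lemma BSrel_holds (m n : ℤ) :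
    (BSb m n)⁻¹ * (BSa m n) ^ m * BSb m n * (BSa m n) ^ (-n) = 1 := by
  have h1 : PresentedGroup.mk (BSrel m n)
      ((FreeGroup.of false)⁻¹ * (FreeGroup.of true) ^ m * FreeGroup.of false *
        (FreeGroup.of true) ^ (-n)) = 1 :=
    (QuotientGroup.eq_one_iff _).mpr (Subgroup.subset_normalClosure rfl)
  simp only [map_mul, map_zpow, map_inv] at h1
  exact h1

/-- A homomorphism from `BS(n,-n)` to the permutations of `ℤ`, sending `a` to translation
by one and `b` to negation. -/
noncomputable def BSphi (n : ℕ) : BS n (-(n:ℤ)) →* Equiv.Perm ℤ :=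
  PresentedGroup.toGroup (f := fun x => if x then Equiv.addLeft (1:ℤ) else Equiv.neg ℤ)
    (by
      intro r hr
      rw [BSrel] at hr
      simp only [Set.mem_singleton_iff] at hr
      subst hr
      simp only [map_mul, map_zpow, map_inv, FreeGroup.lift_apply_of, if_true, if_false, neg_neg]
      ext x
      simp [Equiv.Perm.mul_apply, Equiv.Perm.inv_def])

lemma BSphi_pow (n : ℕ) (k : ℤ) : BSphi n ((BSa n (-(n:ℤ))) ^ k) = Equiv.addLeft k := by
  have : BSphi n (BSa n (-(n:ℤ))) = Equiv.addLeft (1:ℤ) := PresentedGroup.toGroup.of _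
  rw [map_zpow, this]
  simp

lemma BSa_pow_ne_one (n : ℕ) (k : ℤ) (hk : k ≠ 0) : (BSa n (-(n:ℤ))) ^ k ≠ 1 := by
  intro h
  have h2 := congrArg (BSphi n) h
  rw [BSphi_pow, map_one] at h2
  have h3 := congrArg (fun e : Equiv.Perm ℤ => e 0) h2
  simp at h3
  exact hk h3

section helpers

variable {G : Type*} [Group G]

lemma conj_mul_helper {g h c c' c'' : G} (h1 : h * c = c' * h) (h2 : g * c' = c'' * g) :
    (g * h) * c = c'' * (g * h) := by
  rw [mul_assoc, h1, ← mul_assoc, h2, mul_assoc]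

lemma conj_inv_helper {g c c' : G} (h : g * c = c' * g) : g⁻¹ * c' = c * g⁻¹ := by
  have h2 := congrArg (fun x => g⁻¹ * x * g⁻¹) h
  simpa [mul_assoc] using h2.symm

end helpers

/-- Every element of `BS(n,-n)` conjugates `aⁿ` to `aⁿ` or to `a⁻ⁿ`, correspondingly. -/
lemma BS_conj_dichotomy (n : ℕ) (g : BS n (-(n:ℤ))) :
    (g * (BSa n (-(n:ℤ)))^(n:ℤ) = (BSa n (-(n:ℤ)))^(n:ℤ) * g ∧
      g * ((BSa n (-(n:ℤ)))^(n:ℤ))⁻¹ = ((BSa n (-(n:ℤ)))^(n:ℤ))⁻¹ * g) ∨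
    (g * (BSa n (-(n:ℤ)))^(n:ℤ) = ((BSa n (-(n:ℤ)))^(n:ℤ))⁻¹ * g ∧
      g * ((BSa n (-(n:ℤ)))^(n:ℤ))⁻¹ = (BSa n (-(n:ℤ)))^(n:ℤ) * g) := by
  set a := BSa n (-(n:ℤ)) with ha
  set b := BSb n (-(n:ℤ)) with hb
  set c := a ^ (n:ℤ) with hc
  -- the relation
  have hrel : b⁻¹ * c * b * c = 1 := by
    have := BSrel_holds (n:ℤ) (-(n:ℤ))
    simp only [neg_neg] at this
    exact this
  have hconj : b⁻¹ * c * b = c⁻¹ := by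
    have := mul_eq_one_iff_eq_inv.mp hrel
    exact this
  have e1 : b * c⁻¹ = c * b := by
    have : c * b = b * (b⁻¹ * c * b) := by group
    rw [hconj] at this
    exact this.symm
  have e2 : b * c = c⁻¹ * b := by
    have h4 : b⁻¹ * c⁻¹ * b = c := by
      have := congrArg (fun x => x⁻¹) hconj
      simpa [mul_assoc] using this
    have : c⁻¹ * b = b * (b⁻¹ * c⁻¹ * b) := by group
    rw [h4] at this
    exact this.symm
  -- the subgroup of elements satisfying the dichotomy
  let S : Subgroup (BS n (-(n:ℤ))) :=
    { carrier := {g | (g * c = c * g ∧ g * c⁻¹ = c⁻¹ * g) ∨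
        (g * c = c⁻¹ * g ∧ g * c⁻¹ = c * g)}
      one_mem' := by left; constructor <;> simp
      mul_mem' := by
        rintro g h (⟨p1, p2⟩ | ⟨p1, p2⟩) (⟨q1, q2⟩ | ⟨q1, q2⟩)
        · exact Or.inl ⟨conj_mul_helper q1 p1, conj_mul_helper q2 p2⟩
        · exact Or.inr ⟨conj_mul_helper q1 p2, conj_mul_helper q2 p1⟩
        · exact Or.inr ⟨conj_mul_helper q1 p1, conj_mul_helper q2 p2⟩
        · exact Or.inl ⟨conj_mul_helper q1 p2, conj_mul_helper q2 p1⟩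
      inv_mem' := by
        rintro g (⟨p1, p2⟩ | ⟨p1, p2⟩)
        · exact Or.inl ⟨conj_inv_helper p1, conj_inv_helper p2⟩
        · exact Or.inr ⟨conj_inv_helper p2, conj_inv_helper p1⟩ }
  have hS : ∀ g : BS n (-(n:ℤ)), g ∈ S := by
    intro g
    refine PresentedGroup.generated_by _ S ?_ g
    intro j
    cases j
    · -- of false = b
      right
      exact ⟨e2, e1⟩
    · -- of true = a
      left
      constructor
      · show a * c = c * a
        exact ((Commute.refl a).zpow_right (n:ℤ)).eq
      · show a * c⁻¹ = c⁻¹ * a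
        exact ((Commute.refl a).zpow_right (n:ℤ)).inv_right.eq
  exact hS g

/-- In `BS(-n,n) = ⟨a,b ∣ b⁻¹aⁿb = a⁻ⁿ⟩` with `n ≥ 2` (realized here with
the relation `b⁻¹aⁿbaⁿ = 1`, i.e. as `BS n (-n)` in our convention), the element
`λ(aⁿ) + λ(a⁻ⁿ)` is a nontrivial central element of the reduced group C*-algebra
`C*_r(BS(-n,n))` — encoded as a C*-algebra `A` generated by unitaries
`u : BS(-n,n) →* unitary A` with a faithful tracial state `τ` with `τ(u g) = δ_{g,1}`:
the element commutes with everything and is not a scalar multiple of the identity. -/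
theorem bs_neg_n_n_reduced_algebra_central_element (n : ℕ) (hn : 2 ≤ n)
    {A : Type*} [NormedRing A] [StarRing A] [CStarRing A] [CompleteSpace A]
    [NormedAlgebra ℂ A] [StarModule ℂ A]
    (u : BS n (-(n : ℤ)) →* unitary A)
    (hgen : Dense (Submodule.span ℂ
      (Set.range fun g : BS n (-(n : ℤ)) => (u g : A)) : Set A))
    (τ : A →ₗ[ℂ] ℂ) (hτ1 : τ 1 = 1)
    (hτpos : ∀ a : A, 0 ≤ (τ (star a * a)).re ∧ (τ (star a * a)).im = 0)
    (hτtracial : ∀ a b : A, τ (a * b) = τ (b * a))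
    (hτfaithful : ∀ a : A, τ (star a * a) = 0 → a = 0)
    (hτ : ∀ g : BS n (-(n : ℤ)), g ≠ 1 → τ (u g) = 0) :
    (∀ x : A, x * ((u (BSa n (-(n : ℤ)) ^ (n : ℤ)) : A) + (u (BSa n (-(n : ℤ)) ^ (-(n : ℤ))) : A)) =
      ((u (BSa n (-(n : ℤ)) ^ (n : ℤ)) : A) + (u (BSa n (-(n : ℤ)) ^ (-(n : ℤ))) : A)) * x) ∧
    ∀ z : ℂ, ((u (BSa n (-(n : ℤ)) ^ (n : ℤ)) : A) + (u (BSa n (-(n : ℤ)) ^ (-(n : ℤ))) : A)) ≠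
      algebraMap ℂ A z := by
  set a := BSa n (-(n:ℤ)) with ha
  have hne : (n:ℤ) ≠ 0 := by positivity
  have humul : ∀ g h : BS n (-(n:ℤ)), (u g : A) * (u h : A) = (u (g * h) : A) := by
    intro g h; rw [map_mul]; rfl
  have hu1 : (u 1 : A) = 1 := by rw [map_one]; rfl
  have hzneg : a ^ (-(n:ℤ)) = (a ^ (n:ℤ))⁻¹ := zpow_neg a (n:ℤ)
  set T : A := (u (a ^ (n:ℤ)) : A) + (u (a ^ (-(n:ℤ))) : A) with hT
  clear_value T
  constructor
  · -- centrality
    -- first: commutes with each u g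
    have hcomm : ∀ g : BS n (-(n:ℤ)), (u g : A) * T = T * (u g : A) := by
      intro g
      rcases BS_conj_dichotomy n g with ⟨p1, p2⟩ | ⟨p1, p2⟩
      · rw [hT, hzneg, mul_add, add_mul, humul, humul, humul, humul, p1, p2]
      · rw [hT, hzneg, mul_add, add_mul, humul, humul, humul, humul, p1, p2]
        exact add_comm _ _
    -- the commutant of T is closed and contains the span
    have hsub : (Submodule.span ℂ (Set.range fun g : BS n (-(n:ℤ)) => (u g : A)) : Set A)
        ⊆ {x : A | x * T = T * x} := by
      intro x hx
      induction hx using Submodule.span_induction with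
      | mem x hx => obtain ⟨g, rfl⟩ := hx; exact hcomm g
      | zero => show (0:A) * T = T * 0; simp
      | add x y _ _ hx hy =>
          show (x + y) * T = T * (x + y)
          rw [add_mul, mul_add, hx, hy]
      | smul r x _ hx =>
          show (r • x) * T = T * (r • x)
          rw [smul_mul_assoc, mul_smul_comm, hx]
    have hclosed : IsClosed {x : A | x * T = T * x} :=
      isClosed_eq (continuous_id.mul continuous_const) (continuous_const.mul continuous_id)
    intro x
    have hx : x ∈ closure (Submodule.span ℂ
        (Set.range fun g : BS n (-(n:ℤ)) => (u g : A)) : Set A) := by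
      rw [hgen.closure_eq]; trivial
    exact closure_minimal hsub hclosed hx
  · -- nontriviality
    intro z hz
    -- τ T = 0
    have hτT : τ T = 0 := by
      rw [hT, map_add, hτ _ (BSa_pow_ne_one n _ hne), hτ _ (BSa_pow_ne_one n _ (by simpa using hne))]
      ring
    -- τ (algebraMap ℂ A z) = z
    have hτz : τ (algebraMap ℂ A z) = z := by
      rw [Algebra.algebraMap_eq_smul_one, map_smul, hτ1, smul_eq_mul, mul_one]
    have hz0 : z = 0 := by rw [← hτz, ← hz, hτT]
    rw [hz0, map_zero] at hz
    -- from T = 0 derive u(a^{2n}) = -1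
    have h5 : (u (a ^ (n:ℤ)) : A) = -(u (a ^ (-(n:ℤ))) : A) := by
      rw [hT] at hz
      exact eq_neg_of_add_eq_zero_left hz
    have h6 : (u (a ^ ((n:ℤ) + (n:ℤ))) : A) = -1 := by
      have := congrArg (fun x : A => x * (u (a ^ (n:ℤ)) : A)) h5
      simp only [neg_mul] at this
      rw [humul, humul, ← zpow_add, ← zpow_add] at this
      simp only [neg_add_cancel, zpow_zero] at this
      rw [this, hu1]
    have h7 : τ (u (a ^ ((n:ℤ) + (n:ℤ)))) = 0 :=
      hτ _ (BSa_pow_ne_one n _ (by omega))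
    rw [h6] at h7
    simp only [map_neg, hτ1] at h7
    norm_num at h7
end
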